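/- arXiv:1404.3120 — 3 statements merged into one kernel-verified Lean document; each statement's English description precedes it below -/
import Mathlib

section
/- Let R > 0 and let c : ℕ → ℍ be such that the power series ∑_{n≥0} z^n c_n converges absolutely for every z with |z| < R. Let w ∈ ℍ be nonreal with 0 < |w| = r < R, let I = I_w, and define g on the disc {z ∈ L_I : |z| < R} by g(z) = ∑_{n≥0} z^n c_n. If g(w) = w and max{ |g(z)| : z ∈ L_I, |z| ≤ r } = r, then Im_I(∂_c g(w)) = 0, where ∂_c g(w) = ∑_{n≥1} n w^{n−1} c_n. -/
noncomputable section

open Filter Metric Set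

local notation "ℍ" => Quaternion ℝ

/-- The slice (complex plane) `L_I = ℝ + ℝI` through an imaginary unit `I`. -/
def sliceL (I : ℍ) : Set ℍ := {z : ℍ | ∃ x y : ℝ, z = (x : ℍ) + y • I}

/-!
The circle `t ↦ w * exp (t • I)` stays in `L_I` at norm `r`, so `‖g (w * exp (t • I))‖ ≤ r = ‖g w‖`
and `t = 0` maximises `t ↦ ‖g (w * exp (t • I))‖²`. As `w` commutes with `I`,
`g (w * exp (t • I)) = ∑ wⁿ exp (t • n I) cₙ` can be differentiated termwise, with derivative
`w I ∂_c g(w)` at `0`; hence `0 = ⟪w, w I ∂_c g(w)⟫ = r² Re (I ∂_c g(w)) = r² Re (∂_c g(w) I)`.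
-/

open NormedSpace

theorem Quaternion.re_mul_comm (a b : ℍ) : (a * b).re = (b * a).re := by
  simp only [re_mul]; ring

theorem Quaternion.inner_self_mul (w q : ℍ) : inner ℝ w (w * q) = ‖w‖ ^ 2 * q.re := by
  rw [inner_def, star_mul, ← mul_assoc, re_mul_comm, ← mul_assoc, star_mul_self,
    normSq_eq_norm_mul_self]
  simp [sq]

theorem Quaternion.mul_self_eq_neg_one {I : ℍ} (hre : I.re = 0) (hI : ‖I‖ = 1) : I * I = -1 := by
  rw [← sq, sq_eq_neg_normSq.mpr hre, normSq_eq_norm_mul_self, hI, mul_one, coe_one]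

theorem Quaternion.norm_exp_smul {I : ℍ} (hre : I.re = 0) (t : ℝ) : ‖exp (t • I)‖ = 1 := by
  simp [norm_exp, hre]

theorem Quaternion.commute_smul_im (w : ℍ) (a : ℝ) : Commute w (a • w.im) := by
  refine Commute.smul_right ?_ a
  conv_lhs => rw [← re_add_im w]
  exact (coe_commute w.re w.im).add_left (Commute.refl _)

section Slice

variable {I : ℍ}

theorem mul_mem_sliceL (hII : I * I = -1) {a b : ℍ} (ha : a ∈ sliceL I) (hb : b ∈ sliceL I) :
    a * b ∈ sliceL I := by
  obtain ⟨x, y, rfl⟩ := ha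
  obtain ⟨u, v, rfl⟩ := hb
  refine ⟨x * u - y * v, x * v + y * u, ?_⟩
  have hcoe (x : ℝ) : (x : ℍ) = x • 1 := by rw [← Quaternion.coe_mul_eq_smul, mul_one]
  simp only [hcoe, mul_add, add_mul, smul_mul_assoc, mul_smul_comm, hII, one_mul, mul_one]
  module

theorem exp_smul_mem_sliceL (hre : I.re = 0) (t : ℝ) : exp (t • I) ∈ sliceL I := by
  refine ⟨Real.cos ‖t • I‖, Real.sin ‖t • I‖ / ‖t • I‖ * t, ?_⟩
  rw [Quaternion.exp_of_re_eq_zero _ (by simp [hre]), mul_smul]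

theorem mem_sliceL_inv_norm_smul_im (w : ℍ) (hw : w.im ≠ 0) :
    w ∈ sliceL (‖w.im‖⁻¹ • w.im) :=
  ⟨w.re, ‖w.im‖, by rw [smul_smul, mul_inv_cancel₀ (norm_ne_zero_iff.mpr hw), one_smul,
    Quaternion.re_add_im]⟩

end Slice

theorem summable_nat_mul_pow_mul_of_lt {a : ℕ → ℝ} {r ρ : ℝ} (ha : ∀ n, 0 ≤ a n) (hr : 0 ≤ r)
    (hrρ : r < ρ) (hs : Summable fun n => ρ ^ n * a n) :
    Summable fun n : ℕ => (n : ℝ) * (r ^ n * a n) := by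
  have hρ : 0 < ρ := hr.trans_lt hrρ
  have hq : ‖r / ρ‖ < 1 := by
    rw [Real.norm_eq_abs, abs_of_nonneg (by positivity)]
    exact (div_lt_one hρ).mpr hrρ
  have hgeom : Summable fun n : ℕ => (n : ℝ) * (r / ρ) ^ n := by
    simpa using summable_pow_mul_geometric_of_norm_lt_one 1 hq
  refine Summable.of_nonneg_of_le (fun n => by have := ha n; positivity) (fun n => ?_)
    (hgeom.mul_left (∑' n, ρ ^ n * a n))
  calc (n : ℝ) * (r ^ n * a n) = (n : ℝ) * (r / ρ) ^ n * (ρ ^ n * a n) := by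
        rw [div_pow]; field_simp
    _ ≤ (n : ℝ) * (r / ρ) ^ n * ∑' n, ρ ^ n * a n := by
        gcongr
        exact hs.le_tsum n fun m _ => mul_nonneg (pow_nonneg hρ.le m) (ha m)
    _ = _ := mul_comm _ _

theorem summable_nat_mul_pow_mul_norm {R r : ℝ} {c : ℕ → ℍ}
    (hconv : ∀ z : ℍ, ‖z‖ < R → Summable fun n : ℕ => ‖z ^ n * c n‖) (hr : 0 ≤ r)
    (hrR : r < R) : Summable fun n : ℕ => (n : ℝ) * (r ^ n * ‖c n‖) := by
  obtain ⟨ρ, hrρ, hρR⟩ := exists_between hrR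
  have hρ : ‖(ρ : ℍ)‖ = ρ := by
    rw [Quaternion.norm_coe, Real.norm_of_nonneg (hr.trans hrρ.le)]
  refine summable_nat_mul_pow_mul_of_lt (fun n => norm_nonneg _) hr hrρ ?_
  simpa only [norm_mul, norm_pow, hρ] using hconv ρ (hρ.symm ▸ hρR)

section PowerSeries

variable {w I : ℍ} {c : ℕ → ℍ}

theorem pow_mul_exp_smul (hwI : Commute w I) (t : ℝ) (n : ℕ) :
    (w * exp (t • I)) ^ n = w ^ n * exp (t • ((n : ℝ) • I)) := by
  -- `exp_nsmul` is stated for `ℚ`-algebras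
  let : NormedAlgebra ℚ ℍ := NormedAlgebra.restrictScalars ℚ ℝ ℍ
  rw [((hwI.smul_right t).exp_right).mul_pow, ← exp_nsmul, ← Nat.cast_smul_eq_nsmul ℝ,
    smul_comm]

theorem hasDerivAt_tsum_pow_mul_exp_smul (hIre : I.re = 0) (hwI : Commute w I)
    (hu : Summable fun n : ℕ => (n : ℝ) * (‖w‖ ^ n * ‖c n‖))
    (hw : Summable fun n => w ^ n * c n) :
    HasDerivAt (fun t : ℝ => ∑' n, (w * exp (t • I)) ^ n * c n)
      (∑' n : ℕ, (n : ℝ) • (w ^ n * I * c n)) 0 := by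
  simp only [pow_mul_exp_smul hwI]
  have hterm (n : ℕ) (t : ℝ) : HasDerivAt (fun t : ℝ => w ^ n * exp (t • ((n : ℝ) • I)) * c n)
      (w ^ n * (((n : ℝ) • I) * exp (t • ((n : ℝ) • I))) * c n) t :=
    ((hasDerivAt_exp_smul_const' _ t).const_mul _).mul_const _
  have hbound (n : ℕ) (t : ℝ) :
      ‖w ^ n * (((n : ℝ) • I) * exp (t • ((n : ℝ) • I))) * c n‖
        ≤ ‖I‖ * ((n : ℝ) * (‖w‖ ^ n * ‖c n‖)) := by
    rw [norm_mul, norm_mul, norm_mul, norm_pow, norm_smul, ← smul_assoc,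
      Quaternion.norm_exp_smul hIre, Real.norm_natCast]
    exact le_of_eq (by ring)
  have h0 : Summable fun n : ℕ => w ^ n * exp ((0 : ℝ) • ((n : ℝ) • I)) * c n := by
    simpa using hw
  refine (hasDerivAt_tsum (hu.mul_left ‖I‖) hterm hbound h0 0).congr_deriv
    (tsum_congr fun n => ?_)
  rw [zero_smul, exp_zero, mul_one, mul_smul_comm, smul_mul_assoc]

theorem tsum_smul_pow_mul_mul_eq (hwI : Commute w I)
    (hu : Summable fun n : ℕ => (n : ℝ) * (‖w‖ ^ n * ‖c n‖)) :
    ∑' n : ℕ, (n : ℝ) • (w ^ n * I * c n)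
      = w * I * ∑' n : ℕ, ((n : ℝ) + 1) • (w ^ n * c (n + 1)) := by
  have hs : Summable fun n : ℕ => (n : ℝ) • (w ^ n * I * c n) := by
    refine (hu.mul_left ‖I‖).of_norm_bounded fun n => le_of_eq ?_
    rw [norm_smul, norm_mul, norm_mul, norm_pow, Real.norm_natCast]
    ring
  rw [hs.tsum_eq_zero_add, Nat.cast_zero, zero_smul, zero_add, ← tsum_mul_left]
  refine tsum_congr fun n => ?_
  rw [mul_smul_comm, Nat.cast_succ, pow_succ', mul_assoc w, (hwI.pow_left n).eq]
  simp only [mul_assoc]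

end PowerSeries

theorem inner_eq_zero_of_forall_norm_le {E : Type*} [NormedAddCommGroup E]
    [InnerProductSpace ℝ E] {F : ℝ → E} {F' : E} {t : ℝ} (hF : HasDerivAt F F' t)
    (hmax : ∀ s, ‖F s‖ ≤ ‖F t‖) :
    inner ℝ (F t) F' = 0 := by
  have hloc : IsLocalMax (fun s => ‖F s‖ ^ 2) t :=
    Eventually.of_forall fun s => pow_le_pow_left₀ (norm_nonneg _) (hmax s) 2
  simpa using hloc.hasDerivAt_eq_zero hF.norm_sq

theorem slice_deriv_real_at_boundary_fixed_point_general
    (R : ℝ) (c : ℕ → ℍ)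
    (hconv : ∀ z : ℍ, ‖z‖ < R → Summable fun n : ℕ => ‖z ^ n * c n‖)
    (w : ℍ) (hw : w.im ≠ 0) (r : ℝ) (hrR : r < R) (hwr : ‖w‖ = r)
    (I : ℍ) (hI : I = ‖w.im‖⁻¹ • w.im)
    (g : ℍ → ℍ) (hg : ∀ z : ℍ, g z = ∑' n : ℕ, z ^ n * c n)
    (hfix : g w = w)
    (hmax : ∀ z ∈ sliceL I, ‖z‖ ≤ r → ‖g z‖ ≤ r) :
    ((∑' n : ℕ, ((n : ℝ) + 1) • (w ^ n * c (n + 1))) * I).re = 0 := by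
  subst hwr
  have hIre : I.re = 0 := by simp [hI]
  have hII : I * I = -1 :=
    Quaternion.mul_self_eq_neg_one hIre (by rw [hI]; exact norm_smul_inv_norm hw)
  have hwI : Commute w I := hI ▸ Quaternion.commute_smul_im w _
  have hu := summable_nat_mul_pow_mul_norm hconv (norm_nonneg w) hrR
  have hF : HasDerivAt (fun t : ℝ => g (w * exp (t • I)))
      (w * (I * ∑' n : ℕ, ((n : ℝ) + 1) • (w ^ n * c (n + 1)))) 0 := by
    simp only [hg]
    rw [← mul_assoc, ← tsum_smul_pow_mul_mul_eq hwI hu]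
    exact hasDerivAt_tsum_pow_mul_exp_smul hIre hwI hu (hconv w hrR).of_norm
  have hF0 : g (w * exp ((0 : ℝ) • I)) = w := by rw [zero_smul, exp_zero, mul_one, hfix]
  have hle (t : ℝ) : ‖g (w * exp (t • I))‖ ≤ ‖g (w * exp ((0 : ℝ) • I))‖ := by
    rw [hF0]
    refine hmax _ (mul_mem_sliceL hII (hI ▸ mem_sliceL_inv_norm_smul_im w hw)
      (exp_smul_mem_sliceL hIre t)) ?_
    rw [norm_mul, Quaternion.norm_exp_smul hIre, mul_one]
  have h := inner_eq_zero_of_forall_norm_le hF hle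
  rw [hF0, Quaternion.inner_self_mul] at h
  have hw0 : w ≠ 0 := fun h => hw (h ▸ Quaternion.im_zero)
  rw [Quaternion.re_mul_comm]
  exact (mul_eq_zero.mp h).resolve_left (by positivity)

/-- If a quaternionic power series `g(z) = ∑ z^n c_n` (absolutely convergent for `|z| < R`)
restricted to the slice `L_{I_w}` fixes a nonreal point `w` with `|w| = r` and satisfies
`max_{z ∈ L_{I_w}, |z| ≤ r} |g(z)| = r`, then `Im_{I_w}(∂_c g(w)) = 0`,
i.e. `Re(∂_c g(w) · I_w) = 0`. -/
theorem slice_deriv_real_at_boundary_fixed_point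
    (R : ℝ) (hR : 0 < R) (c : ℕ → ℍ)
    (hconv : ∀ z : ℍ, ‖z‖ < R → Summable fun n : ℕ => ‖z ^ n * c n‖)
    (w : ℍ) (hw : w.im ≠ 0) (r : ℝ) (hr0 : 0 < r) (hrR : r < R) (hwr : ‖w‖ = r)
    (I : ℍ) (hI : I = ‖w.im‖⁻¹ • w.im)
    (g : ℍ → ℍ) (hg : ∀ z : ℍ, g z = ∑' n : ℕ, z ^ n * c n)
    (hfix : g w = w)
    (hmax : ∀ z ∈ sliceL I, ‖z‖ ≤ r → ‖g z‖ ≤ r) :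
    ((∑' n : ℕ, ((n : ℝ) + 1) • (w ^ n * c (n + 1))) * I).re = 0 :=
  slice_deriv_real_at_boundary_fixed_point_general R c hconv w hw r hrR hwr I hI g hg hfix hmax
end
end

section
/- Let f(q) = ∑_{n≥0} q^n a_n be a slice regular function on 𝔹. Then φ̂₃(r) = d̂₃(f(r𝔹)) / (d₃(𝔹)·r) = d̂₃(f(r𝔹)) / (√3·r) is an increasing (monotone nondecreasing) function of r on (0,1). -/
/-!
Fix an imaginary unit `I` and `w₁, w₂, w₃ ∈ 𝔹̄_I`. Left multiplication through `L_I ≅ ℂ` makes `ℍ`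
a complex Banach space, and `ĝ_{w₁,w₂,w₃}` becomes a holomorphic `ℍ`-valued power series on the
disc whose coefficients vanish below degree `3`, so `ĝ(ζ) = ζ³ F(ζ)` with `F` holomorphic. By the
maximum modulus principle applied to `F`, for `|z| ≤ r₁ ≤ r₂` there is `|ζ₀| = r₂` with
`r₂³ |ĝ(z)| ≤ r₁³ |ĝ(ζ₀)|`; taking cube roots and suprema gives
`r₂ d̂₃(f(r₁𝔹)) ≤ r₁ d̂₃(f(r₂𝔹))`. Convergence comes from bounding the coefficients of `ĝ` by
`8` times the triple Cauchy product of the `|a_n|`.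
-/

noncomputable section

open Filter Metric Set

local notation "ℍ" => Quaternion ℝ

open Classical in
/-- The normalized coefficients `b_n = a_n a_N⁻¹ |a_N|`, where `a_N` is the first
nonvanishing coefficient (and `b ≡ 0` if all coefficients vanish). -/
def bseq (a : ℕ → ℍ) : ℕ → ℍ :=
  if h : ∃ N, a N ≠ 0 then
    fun n => a n * (a (Nat.find h))⁻¹ * ((‖a (Nat.find h)‖ : ℝ) : ℍ)
  else fun _ => 0

/-- The `n`-th power series coefficient of
`ĝ_{w₁,w₂,w₃}(z) = ∑ zⁿ ∑_{k=0}^n ∑_{j=0}^k (w₂ʲ−w₁ʲ)(w₃^{k−j}−w₁^{k−j})(w₃^{n−k}−w₂^{n−k}) b_j b_{k−j} b_{n−k}`. -/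
def ghatCoeff (b : ℕ → ℍ) (w₁ w₂ w₃ : ℍ) (n : ℕ) : ℍ :=
  ∑ k ∈ Finset.range (n + 1), ∑ j ∈ Finset.range (k + 1),
    (w₂ ^ j - w₁ ^ j) * (w₃ ^ (k - j) - w₁ ^ (k - j)) * (w₃ ^ (n - k) - w₂ ^ (n - k)) *
      (b j * b (k - j) * b (n - k))

/-- The slice `3`-diameter
`d̂₃(f(r𝔹)) = sup_{I∈𝕊} max_{w₁,w₂,w₃ ∈ 𝔹̄_I} max_{z ∈ L_I, |z| ≤ r} |ĝ_{w₁,w₂,w₃}(z)|^{1/3}`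
(for constant `f` all the values `ĝ_{w₁,w₂,w₃}(z)` vanish, so `d̂₃(f(r𝔹)) = 0`). -/
def sliceD3 (a : ℕ → ℍ) (r : ℝ) : ℝ :=
  sSup {x : ℝ | ∃ I w₁ w₂ w₃ z : ℍ, I ^ 2 = -1 ∧
    w₁ ∈ sliceL I ∧ ‖w₁‖ ≤ 1 ∧ w₂ ∈ sliceL I ∧ ‖w₂‖ ≤ 1 ∧ w₃ ∈ sliceL I ∧ ‖w₃‖ ≤ 1 ∧
    z ∈ sliceL I ∧ ‖z‖ ≤ r ∧
    x = ‖∑' n : ℕ, z ^ n * ghatCoeff (bseq a) w₁ w₂ w₃ n‖ ^ ((1 : ℝ) / 3)}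

section PowerSeries

variable {E : Type*} [NormedAddCommGroup E] [NormedSpace ℂ E]

lemma norm_pow_smul_le {c : E} {ζ : ℂ} {ρ : ℝ} (hζ : ‖ζ‖ ≤ ρ) (n : ℕ) :
    ‖ζ ^ n • c‖ ≤ ‖c‖ * ρ ^ n := by
  rw [norm_smul, norm_pow, mul_comm]
  gcongr

lemma differentiableOn_tsum_pow_smul [CompleteSpace E] {c : ℕ → E} {ρ : ℝ}
    (hs : Summable fun n ↦ ‖c n‖ * ρ ^ n) :
    DifferentiableOn ℂ (fun ζ : ℂ ↦ ∑' n, ζ ^ n • c n) (ball 0 ρ) :=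
  Complex.differentiableOn_tsum_of_summable_norm hs (fun n ↦ (differentiableOn_pow n).smul_const _)
    isOpen_ball fun n _ hζ ↦ norm_pow_smul_le (mem_ball_zero_iff.mp hζ).le n

lemma tsum_pow_smul_eq_pow_smul_tsum_add {c : ℕ → E} {m : ℕ} (hc : ∀ n < m, c n = 0) {ζ : ℂ}
    (hs : Summable fun n ↦ ζ ^ n • c n) :
    ∑' n, ζ ^ n • c n = ζ ^ m • ∑' n, ζ ^ n • c (n + m) := by
  rw [← hs.sum_add_tsum_nat_add m, Finset.sum_eq_zero fun n hn ↦ by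
    rw [hc n (Finset.mem_range.mp hn), smul_zero], zero_add, ← tsum_const_smul'']
  exact tsum_congr fun n ↦ by rw [pow_add, mul_comm, mul_smul]

theorem exists_norm_tsum_pow_smul_mul_pow_le [CompleteSpace E] {c : ℕ → E} {m : ℕ}
    (hc : ∀ n < m, c n = 0) {r₁ r₂ ρ : ℝ} (hr₂ : 0 < r₂) (hr₁₂ : r₁ ≤ r₂) (hr₂ρ : r₂ < ρ)
    (hs : Summable fun n ↦ ‖c n‖ * ρ ^ n) {ζ : ℂ} (hζ : ‖ζ‖ ≤ r₁) :
    ∃ ζ₀ : ℂ, ‖ζ₀‖ = r₂ ∧ ‖∑' n, ζ ^ n • c n‖ * r₂ ^ m ≤ ‖∑' n, ζ₀ ^ n • c n‖ * r₁ ^ m := by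
  set F : ℂ → E := fun ζ ↦ ∑' n, ζ ^ n • c (n + m)
  have hs' : Summable fun n ↦ ‖c (n + m)‖ * ρ ^ n := by
    refine (((summable_nat_add_iff m).mpr hs).mul_left (ρ ^ m)⁻¹).congr fun n ↦ ?_
    have hρ : ρ ≠ 0 := (hr₂.trans hr₂ρ).ne'
    rw [pow_add]
    field_simp
  have hF : DiffContOnCl ℂ F (ball 0 r₂) := by
    refine DifferentiableOn.diffContOnCl ?_
    rw [closure_ball 0 hr₂.ne']
    exact (differentiableOn_tsum_pow_smul hs').mono (closedBall_subset_ball hr₂ρ)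
  obtain ⟨ζ₀, hζ₀, hmax⟩ :=
    Complex.exists_mem_frontier_isMaxOn_norm isBounded_ball (nonempty_ball.mpr hr₂) hF
  rw [frontier_ball 0 hr₂.ne', mem_sphere_zero_iff_norm] at hζ₀
  rw [closure_ball 0 hr₂.ne'] at hmax
  have hfactor : ∀ ζ : ℂ, ‖ζ‖ ≤ r₂ → ∑' n, ζ ^ n • c n = ζ ^ m • F ζ := fun ζ hζ ↦
    tsum_pow_smul_eq_pow_smul_tsum_add hc <| Summable.of_norm_bounded
      hs fun n ↦ norm_pow_smul_le (hζ.trans hr₂ρ.le) n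
  refine ⟨ζ₀, hζ₀, ?_⟩
  have hFζ : ‖F ζ‖ ≤ ‖F ζ₀‖ := hmax (mem_closedBall_zero_iff.mpr (hζ.trans hr₁₂))
  rw [hfactor ζ (hζ.trans hr₁₂), hfactor ζ₀ hζ₀.le, norm_smul, norm_smul, norm_pow, norm_pow, hζ₀]
  have hr₁ : 0 ≤ r₁ := (norm_nonneg ζ).trans hζ
  calc ‖ζ‖ ^ m * ‖F ζ‖ * r₂ ^ m ≤ r₁ ^ m * ‖F ζ₀‖ * r₂ ^ m := by gcongr
    _ = r₂ ^ m * ‖F ζ₀‖ * r₁ ^ m := by ring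

end PowerSeries

lemma Quaternion.normSq_eq_one_of_mul_self_eq_neg_one {I : ℍ} (hI : I * I = -1) :
    normSq I = 1 := by
  have h : normSq I ^ 2 = 1 := by rw [sq, ← map_mul, hI, normSq_neg, map_one]
  exact (pow_eq_one_iff_of_nonneg normSq_nonneg two_ne_zero).mp h

lemma Quaternion.star_eq_neg_of_mul_self_eq_neg_one {I : ℍ} (hI : I * I = -1) : star I = -I :=
  star_eq_neg.mpr <| sq_eq_neg_normSq.mp <| by
    rw [sq, hI, normSq_eq_one_of_mul_self_eq_neg_one hI, coe_one]

lemma Quaternion.star_liftAux {I : ℍ} (hI : I * I = -1) (ζ : ℂ) :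
    star (Complex.liftAux I hI ζ) = Complex.liftAux I hI (starRingEnd ℂ ζ) := by
  simp [Complex.liftAux_apply, star_eq_neg_of_mul_self_eq_neg_one hI]

lemma Quaternion.norm_liftAux {I : ℍ} (hI : I * I = -1) (ζ : ℂ) :
    ‖Complex.liftAux I hI ζ‖ = ‖ζ‖ := by
  have h : normSq (Complex.liftAux I hI ζ) = Complex.normSq ζ := by
    apply coe_injective
    rw [← self_mul_star, star_liftAux, ← map_mul, Complex.mul_conj]
    exact AlgHom.commutes _ _
  rw [normSq_eq_norm_mul_self, Complex.normSq_eq_norm_sq, sq] at h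
  exact (mul_self_inj (norm_nonneg _) (norm_nonneg _)).mp h

lemma sliceL_eq_range_liftAux {I : ℍ} (hI : I * I = -1) :
    sliceL I = range (Complex.liftAux I hI) := by
  ext z
  simp only [sliceL, mem_ofPred_eq, mem_range, Complex.liftAux_apply]
  constructor
  · rintro ⟨x, y, rfl⟩
    exact ⟨⟨x, y⟩, rfl⟩
  · rintro ⟨ζ, rfl⟩
    exact ⟨ζ.re, ζ.im, rfl⟩

lemma exists_mem_sliceL_norm_tsum_pow_mul_mul_pow_le {I : ℍ} (hI : I * I = -1) {c : ℕ → ℍ}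
    {m : ℕ} (hc : ∀ n < m, c n = 0) {r₁ r₂ ρ : ℝ} (hr₂ : 0 < r₂) (hr₁₂ : r₁ ≤ r₂)
    (hr₂ρ : r₂ < ρ) (hs : Summable fun n ↦ ‖c n‖ * ρ ^ n) {z : ℍ} (hz : z ∈ sliceL I)
    (hzr : ‖z‖ ≤ r₁) :
    ∃ z' ∈ sliceL I, ‖z'‖ = r₂ ∧ ‖∑' n, z ^ n * c n‖ * r₂ ^ m ≤ ‖∑' n, z' ^ n * c n‖ * r₁ ^ m := by
  let _ : Module ℂ ℍ := Module.compHom ℍ (Complex.liftAux I hI).toRingHom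
  have hsmul (ζ : ℂ) (q : ℍ) : ζ • q = Complex.liftAux I hI ζ * q := rfl
  let _ : NormedSpace ℂ ℍ :=
    ⟨fun ζ q ↦ by rw [hsmul, norm_mul, Quaternion.norm_liftAux]⟩
  rw [sliceL_eq_range_liftAux hI] at hz ⊢
  obtain ⟨ζ, rfl⟩ := hz
  rw [Quaternion.norm_liftAux] at hzr
  obtain ⟨ζ₀, hζ₀, hle⟩ := exists_norm_tsum_pow_smul_mul_pow_le hc hr₂ hr₁₂ hr₂ρ hs hzr
  refine ⟨_, mem_range_self ζ₀, by rwa [Quaternion.norm_liftAux], ?_⟩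
  simpa only [hsmul, map_pow] using hle

def tripleCauchyProduct (u : ℕ → ℝ) (n : ℕ) : ℝ :=
  ∑ k ∈ Finset.range (n + 1), ∑ j ∈ Finset.range (k + 1), u j * u (k - j) * u (n - k)

lemma tripleCauchyProduct_mul_pow (u : ℕ → ℝ) (ρ : ℝ) (n : ℕ) :
    tripleCauchyProduct u n * ρ ^ n = tripleCauchyProduct (fun n ↦ u n * ρ ^ n) n := by
  simp only [tripleCauchyProduct, Finset.sum_mul]
  refine Finset.sum_congr rfl fun k hk ↦ Finset.sum_congr rfl fun j hj ↦ ?_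
  have hjk := Finset.mem_range_succ_iff.mp hj
  have hkn := Finset.mem_range_succ_iff.mp hk
  have hpow : ρ ^ n = ρ ^ j * ρ ^ (k - j) * ρ ^ (n - k) := by
    rw [← pow_add, ← pow_add]; congr 1; omega
  rw [hpow]
  ring

lemma summable_tripleCauchyProduct {u : ℕ → ℝ} (hu : Summable fun n ↦ ‖u n‖) :
    Summable (tripleCauchyProduct u) := by
  have hu₂ := summable_norm_sum_mul_range_of_summable_norm hu hu
  refine (summable_norm_sum_mul_range_of_summable_norm hu₂ hu).of_norm.congr fun n ↦ ?_
  simp only [tripleCauchyProduct, Finset.sum_mul]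

lemma norm_bseq_le (a : ℕ → ℍ) (n : ℕ) : ‖bseq a n‖ ≤ ‖a n‖ := by
  classical
  rw [bseq]
  split_ifs with h
  · have hN : ‖a (Nat.find h)‖ ≠ 0 := norm_ne_zero_iff.mpr (Nat.find_spec h)
    rw [norm_mul, norm_mul, norm_inv, Quaternion.norm_coe, Real.norm_of_nonneg (norm_nonneg _),
      mul_assoc, inv_mul_cancel₀ hN, mul_one]
  · simp

lemma norm_pow_sub_pow_le_two {u v : ℍ} (hu : ‖u‖ ≤ 1) (hv : ‖v‖ ≤ 1) (n : ℕ) :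
    ‖u ^ n - v ^ n‖ ≤ 2 :=
  calc ‖u ^ n - v ^ n‖ ≤ ‖u‖ ^ n + ‖v‖ ^ n := by
        rw [← norm_pow, ← norm_pow]; exact norm_sub_le _ _
    _ ≤ 1 + 1 := add_le_add (pow_le_one₀ (norm_nonneg _) hu) (pow_le_one₀ (norm_nonneg _) hv)
    _ = 2 := one_add_one_eq_two

lemma norm_ghatCoeff_le (b : ℕ → ℍ) {w₁ w₂ w₃ : ℍ} (h₁ : ‖w₁‖ ≤ 1) (h₂ : ‖w₂‖ ≤ 1)
    (h₃ : ‖w₃‖ ≤ 1) (n : ℕ) :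
    ‖ghatCoeff b w₁ w₂ w₃ n‖ ≤ 8 * tripleCauchyProduct (fun n ↦ ‖b n‖) n := by
  simp only [ghatCoeff, tripleCauchyProduct, Finset.mul_sum]
  refine (norm_sum_le _ _).trans <| Finset.sum_le_sum fun k _ ↦
    (norm_sum_le _ _).trans <| Finset.sum_le_sum fun j _ ↦ ?_
  simp only [norm_mul]
  calc _ ≤ 2 * 2 * 2 * (‖b j‖ * ‖b (k - j)‖ * ‖b (n - k)‖) := by
        gcongr <;> exact norm_pow_sub_pow_le_two ‹_› ‹_› _
    _ = _ := by ring

lemma ghatCoeff_eq_zero_of_lt_three (b : ℕ → ℍ) (w₁ w₂ w₃ : ℍ) {n : ℕ} (hn : n < 3) :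
    ghatCoeff b w₁ w₂ w₃ n = 0 := by
  refine Finset.sum_eq_zero fun k hk ↦ Finset.sum_eq_zero fun j hj ↦ ?_
  have hjk := Finset.mem_range_succ_iff.mp hj
  have hkn := Finset.mem_range_succ_iff.mp hk
  obtain h | h | h : j = 0 ∨ k - j = 0 ∨ n - k = 0 := by omega
  all_goals simp [h]

lemma summable_tripleCauchyProduct_norm_bseq_mul_pow {a : ℕ → ℍ} {ρ : ℝ} (hρ : 0 ≤ ρ)
    (hs : Summable fun n ↦ ‖a n‖ * ρ ^ n) :
    Summable fun n ↦ tripleCauchyProduct (fun n ↦ ‖bseq a n‖) n * ρ ^ n := by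
  simp_rw [tripleCauchyProduct_mul_pow]
  refine summable_tripleCauchyProduct <| hs.of_nonneg_of_le (fun n ↦ by positivity) fun n ↦ ?_
  rw [Real.norm_of_nonneg (by positivity)]
  gcongr
  exact norm_bseq_le a n

lemma summable_norm_ghatCoeff_bseq_mul_pow {a : ℕ → ℍ} {ρ : ℝ} (hρ : 0 ≤ ρ)
    (hs : Summable fun n ↦ ‖a n‖ * ρ ^ n) {w₁ w₂ w₃ : ℍ} (h₁ : ‖w₁‖ ≤ 1) (h₂ : ‖w₂‖ ≤ 1)
    (h₃ : ‖w₃‖ ≤ 1) :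
    Summable fun n ↦ ‖ghatCoeff (bseq a) w₁ w₂ w₃ n‖ * ρ ^ n :=
  ((summable_tripleCauchyProduct_norm_bseq_mul_pow hρ hs).mul_left 8).of_nonneg_of_le
    (fun n ↦ by positivity) fun n ↦ by
      rw [← mul_assoc]
      gcongr
      exact norm_ghatCoeff_le _ h₁ h₂ h₃ n

def sliceD3Set (a : ℕ → ℍ) (r : ℝ) : Set ℝ :=
  {x : ℝ | ∃ I w₁ w₂ w₃ z : ℍ, I ^ 2 = -1 ∧
    w₁ ∈ sliceL I ∧ ‖w₁‖ ≤ 1 ∧ w₂ ∈ sliceL I ∧ ‖w₂‖ ≤ 1 ∧ w₃ ∈ sliceL I ∧ ‖w₃‖ ≤ 1 ∧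
    z ∈ sliceL I ∧ ‖z‖ ≤ r ∧
    x = ‖∑' n : ℕ, z ^ n * ghatCoeff (bseq a) w₁ w₂ w₃ n‖ ^ ((1 : ℝ) / 3)}

lemma sliceD3_eq_sSup (a : ℕ → ℍ) (r : ℝ) : sliceD3 a r = sSup (sliceD3Set a r) := rfl

lemma sliceD3_nonneg (a : ℕ → ℍ) (r : ℝ) : 0 ≤ sliceD3 a r :=
  Real.sSup_nonneg <| by rintro _ ⟨_, _, _, _, _, -, -, -, -, -, -, -, -, -, rfl⟩; positivity

lemma bddAbove_sliceD3Set {a : ℕ → ℍ} {r : ℝ} (hr : 0 ≤ r)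
    (hs : Summable fun n ↦ ‖a n‖ * r ^ n) : BddAbove (sliceD3Set a r) := by
  have hT := (summable_tripleCauchyProduct_norm_bseq_mul_pow hr hs).mul_left 8
  refine ⟨(∑' n, 8 * (tripleCauchyProduct (fun n ↦ ‖bseq a n‖) n * r ^ n)) ^ ((1 : ℝ) / 3), ?_⟩
  rintro _ ⟨I, w₁, w₂, w₃, z, -, -, h₁, -, h₂, -, h₃, -, hzr, rfl⟩
  gcongr
  refine tsum_of_norm_bounded hT.hasSum fun n ↦ ?_
  calc ‖z ^ n * ghatCoeff (bseq a) w₁ w₂ w₃ n‖ = ‖z‖ ^ n * ‖ghatCoeff (bseq a) w₁ w₂ w₃ n‖ := by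
        rw [norm_mul, norm_pow]
    _ ≤ r ^ n * (8 * tripleCauchyProduct (fun n ↦ ‖bseq a n‖) n) := by
        gcongr
        exact norm_ghatCoeff_le _ h₁ h₂ h₃ n
    _ = _ := by ring

lemma rpow_one_third_mul_le_of_mul_pow_three_le {x y s t : ℝ} (hx : 0 ≤ x) (hy : 0 ≤ y)
    (hs : 0 ≤ s) (ht : 0 ≤ t) (h : x * t ^ 3 ≤ y * s ^ 3) :
    x ^ ((1 : ℝ) / 3) * t ≤ y ^ ((1 : ℝ) / 3) * s := by
  have hcbrt {u v : ℝ} (hu : 0 ≤ u) (hv : 0 ≤ v) :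
      (u * v ^ 3) ^ ((1 : ℝ) / 3) = u ^ ((1 : ℝ) / 3) * v := by
    rw [Real.mul_rpow hu (by positivity), ← Real.rpow_natCast, ← Real.rpow_mul hv]
    norm_num
  rw [← hcbrt hx ht, ← hcbrt hy hs]
  gcongr

lemma sliceD3_mul_le_sliceD3_mul {a : ℕ → ℍ}
    (hconv : ∀ ρ : ℝ, 0 ≤ ρ → ρ < 1 → Summable fun n : ℕ => ‖a n‖ * ρ ^ n) {r₁ r₂ : ℝ}
    (hr₁ : 0 < r₁) (hr₁₂ : r₁ ≤ r₂) (hr₂ : r₂ < 1) :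
    sliceD3 a r₁ * r₂ ≤ sliceD3 a r₂ * r₁ := by
  have hr₂₀ : 0 < r₂ := hr₁.trans_le hr₁₂
  obtain ⟨ρ, hr₂ρ, hρ⟩ := exists_between hr₂
  have hbdd := bddAbove_sliceD3Set hr₂₀.le (hconv r₂ hr₂₀.le hr₂)
  rw [← le_div_iff₀ hr₂₀, sliceD3_eq_sSup]
  refine Real.sSup_le ?_ (by have := sliceD3_nonneg a r₂; positivity)
  rintro _ ⟨I, w₁, w₂, w₃, z, hI, hw₁, h₁, hw₂, h₂, hw₃, h₃, hz, hzr, rfl⟩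
  obtain ⟨z', hz', hz'r, hle⟩ := exists_mem_sliceL_norm_tsum_pow_mul_mul_pow_le
    (by rwa [← sq]) (fun n ↦ ghatCoeff_eq_zero_of_lt_three _ w₁ w₂ w₃) hr₂₀ hr₁₂ hr₂ρ
    (summable_norm_ghatCoeff_bseq_mul_pow (hr₂₀.trans hr₂ρ).le
      (hconv ρ (hr₂₀.trans hr₂ρ).le hρ) h₁ h₂ h₃) hz hzr
  rw [le_div_iff₀ hr₂₀]
  calc _ ≤ ‖∑' n, z' ^ n * ghatCoeff (bseq a) w₁ w₂ w₃ n‖ ^ ((1 : ℝ) / 3) * r₁ :=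
        rpow_one_third_mul_le_of_mul_pow_three_le (norm_nonneg _) (norm_nonneg _) hr₁.le
          hr₂₀.le hle
    _ ≤ sliceD3 a r₂ * r₁ := by
        gcongr
        exact le_csSup hbdd ⟨I, w₁, w₂, w₃, z', hI, hw₁, h₁, hw₂, h₂, hw₃, h₃, hz', hz'r.le, rfl⟩

/-- The ratio `φ̂₃(r) = d̂₃(f(r𝔹)) / (√3 · r)` is increasing on `(0,1)`. -/
theorem sliceD3_ratio_monotone (a : ℕ → ℍ)
    (hconv : ∀ ρ : ℝ, 0 ≤ ρ → ρ < 1 → Summable fun n : ℕ => ‖a n‖ * ρ ^ n) :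
    MonotoneOn (fun r : ℝ => sliceD3 a r / (Real.sqrt 3 * r)) (Set.Ioo (0 : ℝ) 1) := by
  intro r₁ hr₁ r₂ hr₂ hr₁₂
  have hkey := sliceD3_mul_le_sliceD3_mul hconv hr₁.1 hr₁₂ hr₂.2
  simp only [mul_comm (Real.sqrt 3), ← div_div]
  exact div_le_div_of_nonneg_right (by rwa [div_le_div_iff₀ hr₁.1 hr₂.1]) (Real.sqrt_nonneg 3)
end
end

section
/- For every imaginary unit I ∈ 𝕊, the 4-diameter of the unit ball of ℍ is strictly larger than the 4-diameter of its bidimensional slice: d₄(𝔹) > d₄(𝔹_I), where 𝔹_I = 𝔹 ∩ L_I. -/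
noncomputable section

open Filter Metric Set

local notation "ℍ" => Quaternion ℝ

/-- The `n`-diameter of a subset `E ⊆ ℍ`:
`d_n(E) = sup_{w₁,…,w_n ∈ E} (∏_{1 ≤ j < k ≤ n} |w_k − w_j|)^{2/(n(n−1))}`. -/
def nDiamReal (n : ℕ) (E : Set ℍ) : ℝ :=
  sSup {x : ℝ | ∃ w : Fin n → ℍ, (∀ i, w i ∈ E) ∧
    x = (∏ p ∈ Finset.univ.filter (fun p : Fin n × Fin n => p.1 < p.2), ‖w p.2 - w p.1‖) ^
      (2 / ((n : ℝ) * ((n : ℝ) - 1)))}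

/-!
A point `x + y I` of the slice `L_I` has the same norm as the complex number `x + y i`, so four
points of `𝔹_I` are four complex numbers `z₁, …, z₄` in the closed unit disc, and the product of
their mutual distances is `|det V|` for the Vandermonde matrix `V = (z_j ^ k)`. AM-GM on the
eigenvalues of `V Vᴴ` gives the Hadamard-type bound `|det V|² = det (V Vᴴ) ≤ (tr (V Vᴴ) / 4)⁴ ≤ 4⁴`,
hence `d₄(𝔹_I)⁶ ≤ 16`. In `𝔹`, by contrast, the vertices of a regular tetrahedron in the purely
imaginary quaternions, with circumradius close to `1`, have six mutual distances close to
`√(8/3)`, and `(8/3)³ > 16`.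
-/
theorem Real.prod_le_pow_card_of_sum_le {ι : Type*} [Fintype ι] (z : ι → ℝ) (hz : ∀ i, 0 ≤ z i)
    {c : ℝ} (hsum : ∑ i, z i ≤ Fintype.card ι * c) : ∏ i, z i ≤ c ^ Fintype.card ι := by
  rcases isEmpty_or_nonempty ι with _ | _
  · simp
  set n := Fintype.card ι
  have hn : (0 : ℝ) < n := by exact_mod_cast Fintype.card_pos
  have hgm : ∏ i, z i ^ (n⁻¹ : ℝ) ≤ c := by
    calc ∏ i, z i ^ (n⁻¹ : ℝ) ≤ ∑ i, (n⁻¹ : ℝ) * z i :=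
          Real.geom_mean_le_arith_mean_weighted _ _ _ (fun _ _ => by positivity)
            (by simp [n, hn.ne']) (fun i _ => hz i)
      _ ≤ c := by rw [← Finset.mul_sum]; exact (inv_mul_le_iff₀ hn).2 hsum
  calc ∏ i, z i = (∏ i, z i ^ (n⁻¹ : ℝ)) ^ n := by
        rw [← Finset.prod_pow]
        exact Finset.prod_congr rfl fun i _ =>
          (Real.rpow_inv_natCast_pow (hz i) Fintype.card_ne_zero).symm
    _ ≤ c ^ n := pow_le_pow_left₀ (Finset.prod_nonneg fun i _ => Real.rpow_nonneg (hz i) _) hgm n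

open scoped Matrix ComplexOrder in
theorem Matrix.norm_det_sq_le_card_pow {ι : Type*} [Fintype ι] [DecidableEq ι]
    (V : Matrix ι ι ℂ) (hV : ∀ i j, ‖V i j‖ ≤ 1) :
    ‖V.det‖ ^ 2 ≤ (Fintype.card ι : ℝ) ^ Fintype.card ι := by
  have hG : (V * Vᴴ).PosSemidef := posSemidef_self_mul_conjTranspose V
  have hdet : ‖V.det‖ ^ 2 = ∏ i, hG.1.eigenvalues i := by
    have h := hG.1.det_eq_prod_eigenvalues
    simp only [det_mul, det_conjTranspose, RCLike.star_def, RCLike.mul_conj] at h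
    exact_mod_cast h
  have htrace : ∑ i, hG.1.eigenvalues i = ∑ i, ∑ k, ‖V i k‖ ^ 2 := by
    have h := hG.1.trace_eq_sum_eigenvalues
    simp only [trace, diag, mul_apply, conjTranspose_apply, RCLike.star_def, RCLike.mul_conj] at h
    exact_mod_cast h.symm
  rw [hdet]
  refine Real.prod_le_pow_card_of_sum_le _ hG.eigenvalues_nonneg ?_
  calc ∑ i, hG.1.eigenvalues i = ∑ i, ∑ k, ‖V i k‖ ^ 2 := htrace
    _ ≤ ∑ _i : ι, ∑ _k : ι, (1 : ℝ) := by
      gcongr with i _ k _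
      exact pow_le_one₀ (norm_nonneg _) (hV i k)
    _ = Fintype.card ι * Fintype.card ι := by simp

theorem Finset.prod_filter_fst_lt_snd {α M : Type*} [Fintype α] [LinearOrder α]
    [LocallyFiniteOrderTop α] [CommMonoid M] (f : α → α → M) :
    ∏ p ∈ univ.filter (fun p : α × α => p.1 < p.2), f p.1 p.2 = ∏ i, ∏ j ∈ Ioi i, f i j := by
  rw [prod_filter, Fintype.prod_prod_type]
  refine prod_congr rfl fun i _ => ?_
  rw [← prod_filter]
  congr 1
  ext j
  simp

def pairwiseDistProd {F : Type*} [SeminormedAddCommGroup F] {n : ℕ} (w : Fin n → F) : ℝ :=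
  ∏ p ∈ Finset.univ.filter (fun p : Fin n × Fin n => p.1 < p.2), ‖w p.2 - w p.1‖

theorem pairwiseDistProd_nonneg {F : Type*} [SeminormedAddCommGroup F] {n : ℕ} (w : Fin n → F) :
    0 ≤ pairwiseDistProd w :=
  Finset.prod_nonneg fun _ _ => norm_nonneg _

theorem Complex.sq_pairwiseDistProd_le {n : ℕ} (z : Fin n → ℂ) (hz : ∀ i, ‖z i‖ ≤ 1) :
    pairwiseDistProd z ^ 2 ≤ (n : ℝ) ^ n := by
  have h := (Matrix.vandermonde z).norm_det_sq_le_card_pow fun i j => by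
    rw [Matrix.vandermonde_apply, norm_pow]; exact pow_le_one₀ (norm_nonneg _) (hz i)
  simp only [Matrix.det_vandermonde, norm_prod, Fintype.card_fin] at h
  rwa [pairwiseDistProd, Finset.prod_filter_fst_lt_snd (fun i j => ‖z j - z i‖)]

theorem Quaternion.normSq_eq_one_of_sq_eq_neg_one {I : ℍ} (hI : I ^ 2 = -1) : normSq I = 1 := by
  have h : normSq I ^ 2 = 1 := by rw [← map_pow, hI, normSq_neg, map_one]
  exact (pow_eq_one_iff_of_nonneg normSq_nonneg two_ne_zero).1 h

theorem Quaternion.re_eq_zero_of_sq_eq_neg_one {I : ℍ} (hI : I ^ 2 = -1) : I.re = 0 := by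
  have hre : (I * I).re = -1 := by rw [← sq, hI]; rfl
  have hn := normSq_eq_one_of_sq_eq_neg_one hI
  rw [re_mul] at hre
  rw [normSq_def'] at hn
  nlinarith

theorem Quaternion.norm_coe_add_smul_of_sq_eq_neg_one {I : ℍ} (hI : I ^ 2 = -1) (z : ℂ) :
    ‖(z.re : ℍ) + z.im • I‖ = ‖z‖ := by
  have hre := re_eq_zero_of_sq_eq_neg_one hI
  have hn := normSq_eq_one_of_sq_eq_neg_one hI
  have h : normSq ((z.re : ℍ) + z.im • I) = Complex.normSq z := by
    rw [normSq_def'] at hn ⊢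
    simp only [re_add, imI_add, imJ_add, imK_add, re_coe, imI_coe, imJ_coe, imK_coe, re_smul,
      imI_smul, imJ_smul, imK_smul, smul_eq_mul, hre, Complex.normSq_apply]
    linear_combination z.im ^ 2 * hn - z.im ^ 2 * I.re * hre
  rw [← Real.sqrt_sq (norm_nonneg _), sq, ← normSq_eq_norm_mul_self, h, Complex.normSq_eq_norm_sq,
    Real.sqrt_sq (norm_nonneg _)]

theorem Quaternion.sub_coe_add_smul (I : ℍ) (z u : ℂ) :
    ((z.re : ℍ) + z.im • I) - ((u.re : ℍ) + u.im • I) = ((z - u).re : ℍ) + (z - u).im • I := by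
  simp only [Complex.sub_re, Complex.sub_im, coe_sub, sub_smul]
  abel

theorem mem_sliceL_iff {I w : ℍ} : w ∈ sliceL I ↔ ∃ z : ℂ, w = (z.re : ℍ) + z.im • I :=
  ⟨fun ⟨x, y, h⟩ => ⟨⟨x, y⟩, h⟩, fun ⟨z, h⟩ => ⟨z.re, z.im, h⟩⟩

theorem sq_pairwiseDistProd_le_of_mem_sliceL {n : ℕ} {I : ℍ} (hI : I ^ 2 = -1)
    {w : Fin n → ℍ} (hw : ∀ i, w i ∈ sliceL I) (hw1 : ∀ i, ‖w i‖ ≤ 1) :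
    pairwiseDistProd w ^ 2 ≤ (n : ℝ) ^ n := by
  choose z hz using fun i => mem_sliceL_iff.1 (hw i)
  have hnorm (i j : Fin n) : ‖w j - w i‖ = ‖z j - z i‖ := by
    rw [hz i, hz j, Quaternion.sub_coe_add_smul, Quaternion.norm_coe_add_smul_of_sq_eq_neg_one hI]
  simp only [pairwiseDistProd, hnorm]
  refine Complex.sq_pairwiseDistProd_le z fun i => ?_
  rw [← Quaternion.norm_coe_add_smul_of_sq_eq_neg_one hI, ← hz]
  exact hw1 i

theorem two_div_mul_sub_one_nonneg (n : ℕ) : 0 ≤ 2 / ((n : ℝ) * ((n : ℝ) - 1)) := by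
  rcases n with _ | n
  · simp
  · push_cast
    rw [add_sub_cancel_right]
    positivity

theorem le_nDiamReal {n : ℕ} {E : Set ℍ} (hE : Bornology.IsBounded E) {w : Fin n → ℍ}
    (hw : ∀ i, w i ∈ E) :
    pairwiseDistProd w ^ (2 / ((n : ℝ) * ((n : ℝ) - 1))) ≤ nDiamReal n E := by
  obtain ⟨C, hC⟩ := (Metric.isBounded_iff.1 hE)
  set P := Finset.univ.filter (fun p : Fin n × Fin n => p.1 < p.2)
  refine le_csSup ⟨(C ^ P.card) ^ (2 / ((n : ℝ) * ((n : ℝ) - 1))), ?_⟩ ⟨w, hw, rfl⟩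
  rintro x ⟨v, hv, rfl⟩
  refine Real.rpow_le_rpow (pairwiseDistProd_nonneg v) ?_ (two_div_mul_sub_one_nonneg n)
  rw [← Finset.prod_const]
  exact Finset.prod_le_prod (fun _ _ => norm_nonneg _) fun p _ =>
    dist_eq_norm (v p.2) _ ▸ hC (hv p.2) (hv p.1)

theorem nDiamReal_le {n : ℕ} {E : Set ℍ} (hE : E.Nonempty) {c : ℝ}
    (h : ∀ w : Fin n → ℍ, (∀ i, w i ∈ E) → pairwiseDistProd w ≤ c) :
    nDiamReal n E ≤ c ^ (2 / ((n : ℝ) * ((n : ℝ) - 1))) := by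
  obtain ⟨q, hq⟩ := hE
  refine csSup_le ⟨_, fun _ => q, fun _ => hq, rfl⟩ ?_
  rintro x ⟨w, hw, rfl⟩
  exact Real.rpow_le_rpow (pairwiseDistProd_nonneg w) (h w hw) (two_div_mul_sub_one_nonneg n)

def tetrahedron (t : ℝ) : Fin 4 → ℍ :=
  ![⟨0, t, t, t⟩, ⟨0, t, -t, -t⟩, ⟨0, -t, t, -t⟩, ⟨0, -t, -t, t⟩]

theorem norm_tetrahedron_sq (t : ℝ) (i : Fin 4) : ‖tetrahedron t i‖ ^ 2 = 3 * t ^ 2 := by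
  rw [sq, ← Quaternion.normSq_eq_norm_mul_self, Quaternion.normSq_def']
  fin_cases i <;> simp [tetrahedron] <;> ring

theorem norm_sub_tetrahedron_sq (t : ℝ) {i j : Fin 4} (h : i ≠ j) :
    ‖tetrahedron t j - tetrahedron t i‖ ^ 2 = 8 * t ^ 2 := by
  rw [sq, ← Quaternion.normSq_eq_norm_mul_self, Quaternion.normSq_def']
  simp only [Quaternion.re_sub, Quaternion.imI_sub, Quaternion.imJ_sub, Quaternion.imK_sub]
  fin_cases i <;> fin_cases j <;> simp [tetrahedron] at h ⊢ <;> ring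

theorem pairwiseDistProd_tetrahedron (t : ℝ) :
    pairwiseDistProd (tetrahedron t) = (8 * t ^ 2) ^ 3 := by
  have hpair (p : Fin 4 × Fin 4) (hp : p ∈ Finset.univ.filter fun p => p.1 < p.2) :
      ‖tetrahedron t p.2 - tetrahedron t p.1‖ = √(8 * t ^ 2) := by
    rw [← norm_sub_tetrahedron_sq t (Finset.mem_filter.1 hp).2.ne, Real.sqrt_sq (norm_nonneg _)]
  rw [pairwiseDistProd, Finset.prod_congr rfl hpair, Finset.prod_const,
    show Finset.card _ = 2 * 3 from rfl, pow_mul, Real.sq_sqrt (by positivity)]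

/-- For every imaginary unit `I ∈ 𝕊`, `d₄(𝔹) > d₄(𝔹_I)` where `𝔹_I = 𝔹 ∩ L_I`. -/
theorem d4_ball_gt_d4_slice (I : ℍ) (hI : I ^ 2 = -1) :
    nDiamReal 4 (Metric.ball 0 1) > nDiamReal 4 (Metric.ball 0 1 ∩ sliceL I) := by
  have hslice (w : Fin 4 → ℍ) (hw : ∀ i, w i ∈ ball 0 1 ∩ sliceL I) :
      pairwiseDistProd w ≤ 16 := by
    have h := sq_pairwiseDistProd_le_of_mem_sliceL hI (fun i => (hw i).2)
      fun i => (mem_ball_zero_iff.1 (hw i).1).le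
    rw [show ((4 : ℕ) : ℝ) ^ 4 = 16 ^ 2 by norm_num] at h
    exact (pow_le_pow_iff_left₀ (pairwiseDistProd_nonneg w) (by norm_num) two_ne_zero).1 h
  -- `t = 4 / 7`: `3 t² = 48 / 49 < 1`, while `(8 t²)³ = (128 / 49)³ > 16`.
  have htetra (i : Fin 4) : tetrahedron (4 / 7) i ∈ ball 0 1 := by
    rw [mem_ball_zero_iff, ← abs_norm, ← sq_lt_one_iff_abs_lt_one, norm_tetrahedron_sq]
    norm_num
  have hzero : (0 : ℍ) ∈ ball 0 1 ∩ sliceL I := ⟨mem_ball_self one_pos, 0, 0, by simp⟩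
  calc nDiamReal 4 (ball 0 1 ∩ sliceL I)
      ≤ 16 ^ (2 / ((4 : ℕ) * ((4 : ℕ) - 1 : ℝ))) := nDiamReal_le ⟨0, hzero⟩ hslice
    _ < ((8 * (4 / 7) ^ 2) ^ 3) ^ (2 / ((4 : ℕ) * ((4 : ℕ) - 1 : ℝ))) :=
      Real.rpow_lt_rpow (by norm_num) (by norm_num) (by norm_num)
    _ = _ := by rw [pairwiseDistProd_tetrahedron]
    _ ≤ nDiamReal 4 (ball 0 1) := le_nDiamReal isBounded_ball htetra
end
end
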